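/- arXiv:math/0111308 — 4 statements merged into one kernel-verified Lean document; each statement's English description precedes it below -/
import Mathlib

section
/- With the super-transposition E_{ab}^t = (-1)^{[a]([b]+1)} θ_a θ_b E_{b̄ā} as above, the transposition is an involution (i.e. (E_{ab}^t)^t = E_{ab} for all a, b) if and only if (-1)^{[a]} θ_a θ_{ā} is a constant θ₀ ∈ {±1} independent of a. -/
/-! Since `ā̄ = a` and `[ā] = [a]`, transposing twice multiplies the `(p, q)` entry by
`s_p s_q`, where `s_a = (-1)^{[a]} θ_a θ_{ā}`: the two grading signs combine to
`(-1)^{[p]+[q]}` because `[q]([p]+1) + [p]([q]+1) = [p] + [q] + 2[p][q]`. Involutivity thus says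
`s_a s_b = 1` for all `a, b`; taking `a = b` gives `s_b = ±1`, and then `s_a = s_b`. -/

/-- The ℤ₂-grading: `[a] = 0` for `a ≤ M`, `[a] = 1` for `a > M` (0-indexed). -/
def gr (M N : ℕ) (a : Fin (M + N)) : ℕ := if (a : ℕ) < M then 0 else 1

/-- The index involution `ā`: `ā = M+1-a` for `a ≤ M`, `ā = 2M+N+1-a` for `a > M`
(written 0-indexed). -/
def bar (M N : ℕ) (a : Fin (M + N)) : Fin (M + N) :=
  if h : (a : ℕ) < M then ⟨M - 1 - (a : ℕ), by omega⟩
  else ⟨2 * M + N - 1 - (a : ℕ), by have := a.isLt; omega⟩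

/-- The super-transposition determined by `E_{ab}^t = (-1)^{[a]([b]+1)} θ_a θ_b E_{b̄ā}`,
extended linearly to matrices. -/
noncomputable def stransp (M N : ℕ) (θ : Fin (M + N) → ℂ)
    (A : Matrix (Fin (M + N)) (Fin (M + N)) ℂ) :
    Matrix (Fin (M + N)) (Fin (M + N)) ℂ :=
  fun p q =>
    ((-1 : ℂ) ^ (gr M N (bar M N q) * (gr M N (bar M N p) + 1))
        * θ (bar M N q) * θ (bar M N p)) * A (bar M N q) (bar M N p)

lemma val_bar (M N : ℕ) (a : Fin (M + N)) :
    (bar M N a : ℕ) = if (a : ℕ) < M then M - 1 - a else 2 * M + N - 1 - a := by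
  unfold bar
  split_ifs <;> rfl

lemma bar_bar (M N : ℕ) (a : Fin (M + N)) : bar M N (bar M N a) = a := by
  ext
  rw [val_bar, val_bar]
  split_ifs <;> omega

lemma gr_bar (M N : ℕ) (a : Fin (M + N)) : gr M N (bar M N a) = gr M N a := by
  unfold gr
  rw [val_bar]
  split_ifs <;> omega

lemma neg_one_pow_mul_succ_mul_neg_one_pow_mul_succ {R : Type*} [Monoid R] [HasDistribNeg R]
    (m n : ℕ) : (-1 : R) ^ (n * (m + 1)) * (-1 : R) ^ (m * (n + 1)) = (-1) ^ m * (-1) ^ n := by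
  rw [← pow_add, ← pow_add, show n * (m + 1) + m * (n + 1) = m + n + 2 * (m * n) by ring,
    pow_add, pow_mul, neg_one_sq, one_pow, mul_one]

lemma forall_mul_eq_one_iff_exists_sign_const {ι R : Type*} [Ring R] [NoZeroDivisors R]
    (s : ι → R) :
    (∀ x y, s x * s y = 1) ↔ ∃ c : R, (c = 1 ∨ c = -1) ∧ ∀ x, s x = c := by
  constructor
  · intro h
    rcases isEmpty_or_nonempty ι with hι | ⟨⟨x₀⟩⟩
    · exact ⟨1, .inl rfl, isEmptyElim⟩
    refine ⟨s x₀, mul_self_eq_one_iff.mp (h x₀ x₀), fun x => ?_⟩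
    calc s x = s x * (s x₀ * s x₀) := by rw [h, mul_one]
      _ = s x₀ := by rw [← mul_assoc, h, one_mul]
  · rintro ⟨c, hc, hs⟩ x y
    rw [hs, hs]
    exact mul_self_eq_one_iff.mpr hc

def stranspSign (M N : ℕ) (θ : Fin (M + N) → ℂ) (a : Fin (M + N)) : ℂ :=
  (-1) ^ gr M N a * θ a * θ (bar M N a)

lemma stransp_stransp_apply (M N : ℕ) (θ : Fin (M + N) → ℂ)
    (A : Matrix (Fin (M + N)) (Fin (M + N)) ℂ) (p q : Fin (M + N)) :
    stransp M N θ (stransp M N θ A) p q = stranspSign M N θ p * stranspSign M N θ q * A p q := by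
  simp only [stransp, stranspSign, bar_bar, gr_bar]
  linear_combination (θ (bar M N q) * θ (bar M N p) * θ p * θ q * A p q) *
    neg_one_pow_mul_succ_mul_neg_one_pow_mul_succ (R := ℂ) (gr M N p) (gr M N q)

lemma stransp_stransp_single_eq_iff (M N : ℕ) (θ : Fin (M + N) → ℂ) (a b : Fin (M + N)) :
    stransp M N θ (stransp M N θ (Matrix.single a b 1)) = Matrix.single a b 1 ↔
      stranspSign M N θ a * stranspSign M N θ b = 1 := by
  constructor
  · intro h
    simpa [stransp_stransp_apply] using congrFun₂ h a b
  · intro h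
    ext p q
    rw [stransp_stransp_apply, Matrix.single_apply]
    split_ifs with hpq
    · obtain ⟨rfl, rfl⟩ := hpq
      rw [h, mul_one]
    · rw [mul_zero]

theorem stransp_involutive_iff_general (M N : ℕ) (θ : Fin (M + N) → ℂ) :
    (∀ a b : Fin (M + N),
        stransp M N θ (stransp M N θ (Matrix.single a b (1 : ℂ)))
          = Matrix.single a b (1 : ℂ))
      ↔ ∃ θ₀ : ℂ, (θ₀ = 1 ∨ θ₀ = -1) ∧
          ∀ a : Fin (M + N), (-1 : ℂ) ^ (gr M N a) * θ a * θ (bar M N a) = θ₀ := by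
  simp_rw [stransp_stransp_single_eq_iff]
  exact forall_mul_eq_one_iff_exists_sign_const (stranspSign M N θ)

/-- the super-transposition is an involution, i.e. `(E_{ab}^t)^t = E_{ab}`
for all `a, b`, if and only if `(-1)^{[a]} θ_a θ_{ā}` is a constant `θ₀ ∈ {±1}`
independent of `a`. -/
theorem stransp_involutive_iff (M N : ℕ) (θ : Fin (M + N) → ℂ)
    (hθ : ∀ a, θ a = 1 ∨ θ a = -1) :
    (∀ a b : Fin (M + N),
        stransp M N θ (stransp M N θ (Matrix.single a b (1 : ℂ)))
          = Matrix.single a b (1 : ℂ))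
      ↔ ∃ θ₀ : ℂ, (θ₀ = 1 ∨ θ₀ = -1) ∧
          ∀ a : Fin (M + N), (-1 : ℂ) ^ (gr M N a) * θ a * θ (bar M N a) = θ₀ :=
  stransp_involutive_iff_general M N θ
end

section
/- The graded R-matrix R₁₂(x) = I − x^{-1} P₁₂ satisfies the graded Yang–Baxter equation R₁₂(u−v) R₁₃(u−w) R₂₃(v−w) = R₂₃(v−w) R₁₃(u−w) R₁₂(u−v) on the triple graded tensor product of ℂ^K. -/
/-- Graded permutation operator acting in factors 1 and 2 of `(ℂ^K)^{⊗3}`: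
`P₁₂ (e_a ⊗ e_b ⊗ e_c) = (-1)^{[a][b]} e_b ⊗ e_a ⊗ e_c`. -/
noncomputable def P12 {K : ℕ} (g : Fin K → ℕ) :
    Matrix (Fin K × Fin K × Fin K) (Fin K × Fin K × Fin K) ℂ :=
  fun p q => if p.1 = q.2.1 ∧ p.2.1 = q.1 ∧ p.2.2 = q.2.2
    then (-1 : ℂ) ^ (g q.1 * g q.2.1) else 0

/-- Graded permutation operator acting in factors 2 and 3:
`P₂₃ (e_a ⊗ e_b ⊗ e_c) = (-1)^{[b][c]} e_a ⊗ e_c ⊗ e_b`. -/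
noncomputable def P23 {K : ℕ} (g : Fin K → ℕ) :
    Matrix (Fin K × Fin K × Fin K) (Fin K × Fin K × Fin K) ℂ :=
  fun p q => if p.1 = q.1 ∧ p.2.1 = q.2.2 ∧ p.2.2 = q.2.1
    then (-1 : ℂ) ^ (g q.2.1 * g q.2.2) else 0

/-- Graded permutation operator acting in factors 1 and 3 (with Koszul signs):
`P₁₃ (e_a ⊗ e_b ⊗ e_c) = (-1)^{[a][b]+[a][c]+[b][c]} e_c ⊗ e_b ⊗ e_a`. -/
noncomputable def P13 {K : ℕ} (g : Fin K → ℕ) :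
    Matrix (Fin K × Fin K × Fin K) (Fin K × Fin K × Fin K) ℂ :=
  fun p q => if p.1 = q.2.2 ∧ p.2.1 = q.2.1 ∧ p.2.2 = q.1
    then (-1 : ℂ) ^ (g q.1 * g q.2.1 + g q.1 * g q.2.2 + g q.2.1 * g q.2.2) else 0

/-!
Each `Pᵢⱼ` is a signed permutation matrix: a transposition of the three tensor factors, twisted by
a Koszul sign. Composing two of them multiplies the permutations and adds the sign exponents, and
the exponents only matter mod 2; so the `Pᵢⱼ` satisfy the relations of the transpositions of
`S₃`: `P₁₂P₁₃ = P₁₃P₂₃ = P₂₃P₁₂`, `P₁₃P₁₂ = P₁₂P₂₃ = P₂₃P₁₃` and `P₂₃² = 1`. Expanding both sides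
of the Yang–Baxter equation with `x = u - v`, `y = v - w`, everything cancels except
`(x⁻¹(x+y)⁻¹ + (x+y)⁻¹y⁻¹ - x⁻¹y⁻¹) • (P₁₂P₁₃ - P₁₃P₁₂)`, and the scalar vanishes by partial fractions.
-/

section SignedPermMatrix

variable {n R : Type*} [DecidableEq n]

def signedPermMatrix [Zero R] (σ : Equiv.Perm n) (s : n → R) : Matrix n n R :=
  fun p q => if p = σ q then s q else 0

theorem signedPermMatrix_mul [Fintype n] [NonUnitalNonAssocSemiring R] (σ τ : Equiv.Perm n)
    (s t : n → R) :
    signedPermMatrix σ s * signedPermMatrix τ t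
      = signedPermMatrix (σ * τ) (fun q => s (τ q) * t q) := by
  ext p q
  simp [signedPermMatrix, Matrix.mul_apply]
  -- the two sides differ only in their decidability instances for `p = σ (τ q)`
  rfl

theorem signedPermMatrix_one [Zero R] [One R] :
    signedPermMatrix (1 : Equiv.Perm n) (fun _ => (1 : R)) = 1 := by
  ext p q
  simp only [signedPermMatrix, Matrix.one_apply]
  rfl

variable [Fintype n] [Ring R] {σ τ σ' τ' : Equiv.Perm n} {e f e' f' : n → ℕ}

theorem signedPermMatrix_neg_one_pow_mul (σ τ : Equiv.Perm n) (e f : n → ℕ) :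
    signedPermMatrix σ (fun q => (-1 : R) ^ e q) * signedPermMatrix τ (fun q => (-1) ^ f q)
      = signedPermMatrix (σ * τ) (fun q => (-1) ^ (e (τ q) + f q)) := by
  simp only [signedPermMatrix_mul, pow_add]

theorem signedPermMatrix_neg_one_pow_mul_eq_of_parity (hperm : σ * τ = σ' * τ')
    (hsign : ∀ q, (e (τ q) + f q) % 2 = (e' (τ' q) + f' q) % 2) :
    signedPermMatrix σ (fun q => (-1 : R) ^ e q) * signedPermMatrix τ (fun q => (-1) ^ f q)
      = signedPermMatrix σ' (fun q => (-1) ^ e' q) * signedPermMatrix τ' (fun q => (-1) ^ f' q) := by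
  simp only [signedPermMatrix_neg_one_pow_mul, hperm]
  congr 1
  funext q
  rw [neg_one_pow_eq_pow_mod_two, hsign, ← neg_one_pow_eq_pow_mod_two]

theorem signedPermMatrix_neg_one_pow_mul_eq_one_of_parity (hperm : σ * τ = 1)
    (hsign : ∀ q, (e (τ q) + f q) % 2 = 0) :
    signedPermMatrix σ (fun q => (-1 : R) ^ e q) * signedPermMatrix τ (fun q => (-1) ^ f q)
      = 1 := by
  simp only [signedPermMatrix_neg_one_pow_mul, hperm]
  convert signedPermMatrix_one using 2
  funext q
  rw [neg_one_pow_eq_pow_mod_two, hsign, pow_zero]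

end SignedPermMatrix

section TripleSwaps

variable {α : Type*}

def swap12 : Equiv.Perm (α × α × α) :=
  Function.Involutive.toPerm (fun q => (q.2.1, q.1, q.2.2)) fun _ => rfl

def swap13 : Equiv.Perm (α × α × α) :=
  Function.Involutive.toPerm (fun q => (q.2.2, q.2.1, q.1)) fun _ => rfl

def swap23 : Equiv.Perm (α × α × α) :=
  Function.Involutive.toPerm (fun q => (q.1, q.2.2, q.2.1)) fun _ => rfl

@[simp] theorem swap12_apply (q : α × α × α) : swap12 q = (q.2.1, q.1, q.2.2) := rfl

@[simp] theorem swap13_apply (q : α × α × α) : swap13 q = (q.2.2, q.2.1, q.1) := rfl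

@[simp] theorem swap23_apply (q : α × α × α) : swap23 q = (q.1, q.2.2, q.2.1) := rfl

end TripleSwaps

section GradedPermutations

variable {K : ℕ} (g : Fin K → ℕ)

theorem P12_eq_signedPermMatrix :
    P12 g = signedPermMatrix swap12 fun q => (-1 : ℂ) ^ (g q.1 * g q.2.1) := by
  ext p q
  simp [P12, signedPermMatrix, Prod.ext_iff]

theorem P13_eq_signedPermMatrix :
    P13 g = signedPermMatrix swap13 fun q =>
      (-1 : ℂ) ^ (g q.1 * g q.2.1 + g q.1 * g q.2.2 + g q.2.1 * g q.2.2) := by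
  ext p q
  simp [P13, signedPermMatrix, Prod.ext_iff]

theorem P23_eq_signedPermMatrix :
    P23 g = signedPermMatrix swap23 fun q => (-1 : ℂ) ^ (g q.2.1 * g q.2.2) := by
  ext p q
  simp [P23, signedPermMatrix, Prod.ext_iff]

theorem P12_mul_P13 : P12 g * P13 g = P13 g * P23 g := by
  rw [P12_eq_signedPermMatrix, P13_eq_signedPermMatrix, P23_eq_signedPermMatrix]
  exact signedPermMatrix_neg_one_pow_mul_eq_of_parity (Equiv.ext fun _ => rfl)
    fun _ => by simp only [swap13_apply, swap23_apply]; grind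

theorem P13_mul_P23 : P13 g * P23 g = P23 g * P12 g := by
  rw [P12_eq_signedPermMatrix, P13_eq_signedPermMatrix, P23_eq_signedPermMatrix]
  exact signedPermMatrix_neg_one_pow_mul_eq_of_parity (Equiv.ext fun _ => rfl)
    fun _ => by simp only [swap12_apply, swap23_apply]; grind

theorem P13_mul_P12 : P13 g * P12 g = P12 g * P23 g := by
  rw [P12_eq_signedPermMatrix, P13_eq_signedPermMatrix, P23_eq_signedPermMatrix]
  exact signedPermMatrix_neg_one_pow_mul_eq_of_parity (Equiv.ext fun _ => rfl)
    fun _ => by simp only [swap12_apply, swap23_apply]; grind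

theorem P12_mul_P23 : P12 g * P23 g = P23 g * P13 g := by
  rw [P12_eq_signedPermMatrix, P13_eq_signedPermMatrix, P23_eq_signedPermMatrix]
  exact signedPermMatrix_neg_one_pow_mul_eq_of_parity (Equiv.ext fun _ => rfl)
    fun _ => by simp only [swap13_apply, swap23_apply]; grind

theorem P23_mul_self : P23 g * P23 g = 1 := by
  rw [P23_eq_signedPermMatrix]
  exact signedPermMatrix_neg_one_pow_mul_eq_one_of_parity (Equiv.ext fun _ => rfl)
    fun _ => by simp only [swap23_apply]; grind

end GradedPermutations

theorem yang_baxter_of_transposition_relations {𝕜 A : Type*} [Field 𝕜] [Ring A] [Algebra 𝕜 A]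
    {p q r : A} (hpq : p * q = q * r) (hqr : q * r = r * p) (hqp : q * p = p * r)
    (hpr : p * r = r * q) (hr : r * r = 1) {x y : 𝕜} (hx : x ≠ 0) (hy : y ≠ 0)
    (hxy : x + y ≠ 0) :
    (1 - x⁻¹ • p) * (1 - (x + y)⁻¹ • q) * (1 - y⁻¹ • r)
      = (1 - y⁻¹ • r) * (1 - (x + y)⁻¹ • q) * (1 - x⁻¹ • p) := by
  have hpqr : p * q * r = q := by rw [hpq, mul_assoc, hr, mul_one]
  have hrqp : r * q * p = q := by rw [mul_assoc, hqp, hpr, ← mul_assoc, hr, one_mul]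
  have hinv : x⁻¹ * (x + y)⁻¹ + (x + y)⁻¹ * y⁻¹ = x⁻¹ * y⁻¹ := by
    field_simp
    ring
  rw [← sub_eq_zero]
  calc _ = (x⁻¹ * (x + y)⁻¹ + (x + y)⁻¹ * y⁻¹ - x⁻¹ * y⁻¹) • (p * q - q * p) := by
        simp only [mul_sub, sub_mul, mul_one, one_mul, smul_mul_smul_comm, hpqr, hrqp]
        rw [hpq, hqr, ← hpr, ← hqp]
        match_scalars <;> ring1
    _ = 0 := by rw [hinv, sub_self, zero_smul]

theorem graded_yang_baxter_general {K : ℕ} (g : Fin K → ℕ)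
    (u v w : ℂ) (huv : u ≠ v) (huw : u ≠ w) (hvw : v ≠ w) :
    (1 - (u - v)⁻¹ • P12 g) * (1 - (u - w)⁻¹ • P13 g) * (1 - (v - w)⁻¹ • P23 g)
      = (1 - (v - w)⁻¹ • P23 g) * (1 - (u - w)⁻¹ • P13 g)
          * (1 - (u - v)⁻¹ • P12 g) := by
  rw [← sub_add_sub_cancel u v w]
  exact yang_baxter_of_transposition_relations (P12_mul_P13 g) (P13_mul_P23 g) (P13_mul_P12 g)
    (P12_mul_P23 g) (P23_mul_self g) (sub_ne_zero.2 huv) (sub_ne_zero.2 hvw)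
    (by rwa [sub_add_sub_cancel, sub_ne_zero])

/-- the graded R-matrix `R(x) = I − x⁻¹ P` satisfies the graded
Yang–Baxter equation
`R₁₂(u−v) R₁₃(u−w) R₂₃(v−w) = R₂₃(v−w) R₁₃(u−w) R₁₂(u−v)`. -/
theorem graded_yang_baxter {K : ℕ} (hK : 1 ≤ K) (g : Fin K → ℕ)
    (hg : ∀ a, g a ≤ 1) (u v w : ℂ) (huv : u ≠ v) (huw : u ≠ w) (hvw : v ≠ w) :
    (1 - (u - v)⁻¹ • P12 g) * (1 - (u - w)⁻¹ • P13 g) * (1 - (v - w)⁻¹ • P23 g)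
      = (1 - (v - w)⁻¹ • P23 g) * (1 - (u - w)⁻¹ • P13 g)
          * (1 - (u - v)⁻¹ • P12 g) :=
  graded_yang_baxter_general g u v w huv huw hvw
end

section
/- Let Y(M|N) be the super Yangian with grading [a]=0 for a≤M, [a]=1 for a>M, and set T̃^{ab}(u) = (-1)^{[ā]([b̄]+1)} T^{b̄ā}(u) with ā = M+N+1−a and new grading [a]' = [ā]+1 (mod 2). Then the T̃^{ab}(u) satisfy the defining commutation relations of Y(N|M): [T̃^{ab}(u), T̃^{cd}(v)}' = (-1)^{[a]'[b]'+([a]'+[b]')[c]'} (u−v)^{-1} (T̃^{cb}(u)T̃^{ad}(v) − T̃^{cb}(v)T̃^{ad}(u)). -/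
/-- The order-reversing index map `ā = M+N+1−a` (written 0-indexed). -/
def rev (M N : ℕ) (a : Fin (M + N)) : Fin (M + N) :=
  ⟨M + N - 1 - (a : ℕ), by have := a.isLt; omega⟩

/-- The new grading `[a]' = [ā] + 1` (mod 2; we work with natural-number
exponents of `(-1)`, so only the parity matters). -/
def gr' (M N : ℕ) (a : Fin (M + N)) : ℕ := gr M N (rev M N a) + 1

/-- The transformed generators `T̃^{ab}(u) = (-1)^{[ā]([b̄]+1)} T^{b̄ā}(u)`. -/
noncomputable def Ttilde (M N : ℕ) {A : Type*} [Ring A] [Algebra ℂ A]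
    (T : Fin (M + N) → Fin (M + N) → ℂ → A)
    (a b : Fin (M + N)) (u : ℂ) : A :=
  ((-1 : ℂ) ^ (gr M N (rev M N a) * (gr M N (rev M N b) + 1)))
    • T (rev M N b) (rev M N a) u

/-! The relation for `T̃` at `(a, b, c, d; u, v)` is the relation for `T` at
`(d̄, c̄, b̄, ā; v, u)` read backwards: swapping the two factors of a super-commutator
`XY − εYX` costs the factor `−ε`, and since `[x]' = [x̄] + 1` all signs then agree modulo 2. -/

section
variable {R : Type*} [Monoid R] [HasDistribNeg R]

theorem neg_one_pow_swap_sign (α β γ δ : ℕ) :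
    (-1 : R) ^ ((δ + γ) * (β + α)) * ((-1) ^ (α * (β + 1)) * (-1) ^ (γ * (δ + 1)))
        * (-1) ^ (δ * γ + (δ + γ) * β)
      = -((-1) ^ ((α + 1) * (β + 1) + (α + 1 + (β + 1)) * (γ + 1))
          * ((-1) ^ (γ * (β + 1)) * (-1) ^ (α * (δ + 1)))) := by
  rw [← pow_add, ← pow_add, ← pow_add, ← pow_add, ← pow_add, ← mul_neg_one ((-1 : R) ^ _),
    ← pow_succ]
  apply neg_one_pow_congr
  simp only [Nat.even_add, Nat.even_mul, Nat.even_add_one]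
  by_cases Even α <;> by_cases Even β <;> by_cases Even γ <;> by_cases Even δ <;> simp [*]

theorem neg_one_pow_shift_parity (α β γ δ : ℕ) :
    (-1 : R) ^ ((α + 1 + (β + 1)) * (γ + 1 + (δ + 1))) = (-1) ^ ((δ + γ) * (β + α)) := by
  apply neg_one_pow_congr
  simp only [Nat.even_add, Nat.even_mul, Nat.even_add_one]
  by_cases Even α <;> by_cases Even β <;> by_cases Even γ <;> by_cases Even δ <;> simp [*]

end

theorem twisted_relation_of_swapped_relation {K A : Type*} [Field K] [Ring A] [Algebra K A]
    {ε s t σ σ' u v : K} {X Y P Q : A} (hε : ε * ε = 1) (hsign : ε * s * σ = -(σ' * t))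
    (h : Y * X - ε • (X * Y) = (σ / (v - u)) • (Q - P)) :
    s • (X * Y) - ε • s • (Y * X) = (σ' / (u - v)) • (t • P - t • Q) := by
  rw [← neg_sub u v, div_neg] at h
  linear_combination (norm := module) (-(ε * s)) • h - (s * hε) • (X * Y)
    + (hsign / (u - v)) • (Q - P)

/-- if `T` satisfies the defining relations of `Y(M|N)`, then the
`T̃^{ab}(u)` satisfy the defining commutation relations of `Y(N|M)` with respect
to the new grading `[a]' = [ā]+1`:
`[T̃^{ab}(u), T̃^{cd}(v)}' = (-1)^{[a]'[b]'+([a]'+[b]')[c]'} (u−v)⁻¹ (T̃^{cb}(u)T̃^{ad}(v) − T̃^{cb}(v)T̃^{ad}(u))`. -/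
theorem superYangian_swap (M N : ℕ) (A : Type*) [Ring A] [Algebra ℂ A]
    (T : Fin (M + N) → Fin (M + N) → ℂ → A)
    (hrel : ∀ (a b c d : Fin (M + N)) (u v : ℂ), u ≠ v →
      T a b u * T c d v
          - ((-1 : ℂ) ^ ((gr M N a + gr M N b) * (gr M N c + gr M N d)))
              • (T c d v * T a b u)
        = (((-1 : ℂ) ^ (gr M N a * gr M N b + (gr M N a + gr M N b) * gr M N c))
              / (u - v))
            • (T c b u * T a d v - T c b v * T a d u)) :
    ∀ (a b c d : Fin (M + N)) (u v : ℂ), u ≠ v →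
      Ttilde M N T a b u * Ttilde M N T c d v
          - ((-1 : ℂ) ^ ((gr' M N a + gr' M N b) * (gr' M N c + gr' M N d)))
              • (Ttilde M N T c d v * Ttilde M N T a b u)
        = (((-1 : ℂ) ^ (gr' M N a * gr' M N b + (gr' M N a + gr' M N b) * gr' M N c))
              / (u - v))
            • (Ttilde M N T c b u * Ttilde M N T a d v
                - Ttilde M N T c b v * Ttilde M N T a d u) := by
  intro a b c d u v huv
  have h := hrel (rev M N d) (rev M N c) (rev M N b) (rev M N a) v u huv.symm
  simp only [Ttilde, gr', smul_mul_smul_comm]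
  generalize gr M N (rev M N a) = α, gr M N (rev M N b) = β, gr M N (rev M N c) = γ,
    gr M N (rev M N d) = δ at h ⊢
  rw [neg_one_pow_shift_parity, mul_comm ((-1 : ℂ) ^ (γ * (δ + 1)))]
  exact twisted_relation_of_swapped_relation (by rw [← mul_pow]; simp)
    (neg_one_pow_swap_sign α β γ δ) h
end

section
/- Let F satisfy F^t = −F and [F₁, F₂} = P₁₂F₂ − F₂P₁₂ + F₂Q₁₂ − Q₁₂F₂, with P² = I, PQ = QP = θ₀Q, Q² = (M−2n)Q, and the intertwining relations P₁₂F₂ = F₁P₁₂, Q₁₂F₂ = −Q₁₂F₁, F₁Q₁₂ = −F₂Q₁₂. Then 𝔽(u) = I + (u+1/2)^{-1}F satisfies the reflection-type relation: [𝔽₁(u), 𝔽₂(v)} = (u−v)^{-1}(P₁₂𝔽₁(u)𝔽₂(v) − 𝔽₂(v)𝔽₁(u)P₁₂) − (u+v)^{-1}(𝔽₁(u)Q₁₂𝔽₂(v) − 𝔽₂(v)Q₁₂𝔽₁(u)) + (u²−v²)^{-1}(P₁₂𝔽₁(u)Q₁₂𝔽₂(v) − 𝔽₂(v)Q₁₂𝔽₁(u)P₁₂).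 -/
/-- Super-transposition `E_{ab}^t = (-1)^{[a]([b]+1)} θ_a θ_b E_{b̄ā}`, extended to
matrices with entries in a superalgebra `A`. -/
noncomputable def stranspA (M N : ℕ) {A : Type*} [Ring A] [Algebra ℂ A]
    (θ : Fin (M + N) → ℂ) (F : Matrix (Fin (M + N)) (Fin (M + N)) A) :
    Matrix (Fin (M + N)) (Fin (M + N)) A :=
  fun p q =>
    ((-1 : ℂ) ^ (gr M N (bar M N q) * (gr M N (bar M N p) + 1))
        * θ (bar M N q) * θ (bar M N p)) • F (bar M N q) (bar M N p)

/-- The graded permutation operator `P₁₂` as a matrix over `A`. -/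
noncomputable def PmatA (M N : ℕ) (A : Type*) [Ring A] [Algebra ℂ A] :
    Matrix (Fin (M + N) × Fin (M + N)) (Fin (M + N) × Fin (M + N)) A :=
  fun p q => if p.1 = q.2 ∧ p.2 = q.1
    then ((-1 : ℂ) ^ (gr M N q.1 * gr M N q.2)) • (1 : A) else 0

/-- The matrix `Q₁₂ = P₁₂^{t₁}` (partial super-transposition in the first factor,
with the Koszul sign of the graded tensor product taken into account). -/
noncomputable def QmatA (M N : ℕ) (A : Type*) [Ring A] [Algebra ℂ A]
    (θ : Fin (M + N) → ℂ) :
    Matrix (Fin (M + N) × Fin (M + N)) (Fin (M + N) × Fin (M + N)) A :=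
  fun p q =>
    ((-1 : ℂ) ^ (gr M N (bar M N q.1) * (gr M N (bar M N p.1) + 1))
        * θ (bar M N q.1) * θ (bar M N p.1)
        * (-1 : ℂ) ^ ((gr M N p.2 + gr M N q.2)
            * (gr M N (bar M N q.1) + gr M N (bar M N p.1))))
      • PmatA M N A (bar M N q.1, p.2) (bar M N p.1, q.2)

/-- `F₁ = F ⊗ I` on the graded tensor square. -/
def emb1 (M N : ℕ) {A : Type*} [Ring A]
    (F : Matrix (Fin (M + N)) (Fin (M + N)) A) :
    Matrix (Fin (M + N) × Fin (M + N)) (Fin (M + N) × Fin (M + N)) A :=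
  fun p q => if p.2 = q.2 then F p.1 q.1 else 0

/-- `F₂ = I ⊗ F` on the graded tensor square (with the Koszul sign for an even
matrix `F` with homogeneous entries). -/
noncomputable def emb2 (M N : ℕ) {A : Type*} [Ring A] [Algebra ℂ A]
    (F : Matrix (Fin (M + N)) (Fin (M + N)) A) :
    Matrix (Fin (M + N) × Fin (M + N)) (Fin (M + N) × Fin (M + N)) A :=
  fun p q => if p.1 = q.1
    then ((-1 : ℂ) ^ ((gr M N p.2 + gr M N q.2) * gr M N q.1)) • F p.2 q.2 else 0

/-!
Only the algebraic relations among `P = P₁₂`, `Q = Q₁₂`, `F₁`, `F₂` enter. With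
`𝔽₁ = 1 + a F₁` and `𝔽₂ = 1 + b F₂`, the left side is `ab [F₁, F₂]`. Since `P² = 1` turns
`P F₂ = F₁ P` into `P F₁ = F₂ P`, and `PQ = QP = Q`, the three brackets on the right collapse to
`(b - a)(F₁P - F₂P)`, `-(a + b)(F₂Q - QF₂)` and `(a - b)(F₂Q - QF₂)`, while the osp relation reads
`[F₁, F₂] = (F₁P - F₂P) + (F₂Q - QF₂)`. The claim thus reduces to the scalar identities
`(u - v)⁻¹ (b - a) = ab` and `(u + v)⁻¹ (a + b) + (u² - v²)⁻¹ (a - b) = ab` for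
`a = (u + 1/2)⁻¹`, `b = (v + 1/2)⁻¹`.
-/

theorem mul_eq_mul_of_mul_self_eq_one {S : Type*} [Monoid S] {p x y : S} (hp : p * p = 1)
    (h : p * y = x * p) : p * x = y * p := by
  calc p * x = p * (x * p) * p := by rw [mul_assoc, mul_assoc, hp, mul_one]
    _ = y * p := by rw [← h, ← mul_assoc, hp, one_mul]

section OneAddSmul

variable {R : Type*} [Ring R] [Algebra ℂ R]

theorem one_add_smul_commutator (a b : ℂ) (x y : R) :
    (1 + a • x) * (1 + b • y) - (1 + b • y) * (1 + a • x) = (a * b) • (x * y - y * x) := by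
  simp only [mul_add, add_mul, mul_one, one_mul, smul_mul_smul_comm]
  module

variable {P Q F₁ F₂ : R} (a b : ℂ)

theorem perm_bracket (hP2 : P * P = 1) (hPF : P * F₂ = F₁ * P) :
    P * (1 + a • F₁) * (1 + b • F₂) - (1 + b • F₂) * (1 + a • F₁) * P
      = (b - a) • (F₁ * P - F₂ * P) := by
  have hPF' := mul_eq_mul_of_mul_self_eq_one hP2 hPF
  have hPFF : P * (F₁ * F₂) = F₂ * (F₁ * P) := by
    rw [← mul_assoc, hPF', mul_assoc, hPF]
  simp only [mul_add, add_mul, mul_one, one_mul, smul_mul_assoc, mul_smul_comm, mul_assoc]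
  rw [hPF, hPF', hPFF]
  module

theorem trace_bracket (hQF₂ : Q * F₂ = -(Q * F₁)) (hF₁Q : F₁ * Q = -(F₂ * Q)) :
    (1 + a • F₁) * Q * (1 + b • F₂) - (1 + b • F₂) * Q * (1 + a • F₁)
      = -(a + b) • (F₂ * Q - Q * F₂) := by
  have hQF₁ : Q * F₁ = -(Q * F₂) := by rw [hQF₂, neg_neg]
  have hF₁QF₂ : F₁ * (Q * F₂) = -(F₂ * (Q * F₂)) := by
    rw [← mul_assoc, hF₁Q, neg_mul, mul_assoc]
  have hF₂QF₁ : F₂ * (Q * F₁) = -(F₂ * (Q * F₂)) := by rw [hQF₁, mul_neg]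
  simp only [mul_add, add_mul, mul_one, one_mul, smul_mul_assoc, mul_smul_comm, mul_assoc]
  rw [hF₁QF₂, hF₂QF₁, hQF₁, hF₁Q]
  module

theorem perm_trace_bracket (hP2 : P * P = 1) (hPQ : P * Q = Q) (hQP : Q * P = Q)
    (hPF : P * F₂ = F₁ * P) :
    P * (1 + a • F₁) * Q * (1 + b • F₂) - (1 + b • F₂) * Q * (1 + a • F₁) * P
      = (a - b) • (F₂ * Q - Q * F₂) := by
  have hPF' := mul_eq_mul_of_mul_self_eq_one hP2 hPF
  have hleft : P * (1 + a • F₁) * Q = Q + a • (F₂ * Q) := by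
    rw [mul_add, mul_one, mul_smul_comm, hPF', add_mul, smul_mul_assoc, hPQ, mul_assoc, hPQ]
  have hright : Q * (1 + a • F₁) * P = Q + a • (Q * F₂) := by
    rw [mul_add, mul_one, mul_smul_comm, add_mul, smul_mul_assoc, hQP, mul_assoc, ← hPF,
      ← mul_assoc, hQP]
  rw [hleft, mul_assoc _ Q, mul_assoc _ (Q * _), hright]
  simp only [mul_add, add_mul, mul_one, one_mul, smul_mul_assoc, mul_smul_comm, mul_assoc]
  module

variable {a b}

theorem one_add_smul_reflection (hP2 : P * P = 1) (hPQ : P * Q = Q) (hQP : Q * P = Q)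
    (hPF : P * F₂ = F₁ * P) (hQF₂ : Q * F₂ = -(Q * F₁)) (hF₁Q : F₁ * Q = -(F₂ * Q))
    (hosp : F₁ * F₂ - F₂ * F₁ = P * F₂ - F₂ * P + F₂ * Q - Q * F₂)
    {p q r : ℂ} (hp : p * (b - a) = a * b) (hqr : q * (a + b) + r * (a - b) = a * b) :
    (1 + a • F₁) * (1 + b • F₂) - (1 + b • F₂) * (1 + a • F₁)
      = p • (P * (1 + a • F₁) * (1 + b • F₂) - (1 + b • F₂) * (1 + a • F₁) * P)
        - q • ((1 + a • F₁) * Q * (1 + b • F₂) - (1 + b • F₂) * Q * (1 + a • F₁))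
        + r • (P * (1 + a • F₁) * Q * (1 + b • F₂) - (1 + b • F₂) * Q * (1 + a • F₁) * P) := by
  rw [one_add_smul_commutator, hosp, hPF, perm_bracket a b hP2 hPF, trace_bracket a b hQF₂ hF₁Q,
    perm_trace_bracket a b hP2 hPQ hQP hPF]
  linear_combination (norm := module) hp • (F₂ * P - F₁ * P) + hqr • (Q * F₂ - F₂ * Q)

end OneAddSmul

theorem osp_evaluation_reflection_general (M n : ℕ) (A : Type*) [Ring A] [Algebra ℂ A]
    (θ : Fin (M + 2 * n) → ℂ)
    (F : Matrix (Fin (M + 2 * n)) (Fin (M + 2 * n)) A)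
    (hP2 : PmatA M (2 * n) A * PmatA M (2 * n) A = 1)
    (hPQ : PmatA M (2 * n) A * QmatA M (2 * n) A θ = QmatA M (2 * n) A θ)
    (hQP : QmatA M (2 * n) A θ * PmatA M (2 * n) A = QmatA M (2 * n) A θ)
    (hint1 : PmatA M (2 * n) A * emb2 M (2 * n) F = emb1 M (2 * n) F * PmatA M (2 * n) A)
    (hint2 : QmatA M (2 * n) A θ * emb2 M (2 * n) F = -(QmatA M (2 * n) A θ * emb1 M (2 * n) F))
    (hint3 : emb1 M (2 * n) F * QmatA M (2 * n) A θ = -(emb2 M (2 * n) F * QmatA M (2 * n) A θ))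
    (hosp : emb1 M (2 * n) F * emb2 M (2 * n) F - emb2 M (2 * n) F * emb1 M (2 * n) F
      = PmatA M (2 * n) A * emb2 M (2 * n) F - emb2 M (2 * n) F * PmatA M (2 * n) A
        + emb2 M (2 * n) F * QmatA M (2 * n) A θ - QmatA M (2 * n) A θ * emb2 M (2 * n) F)
    (u v : ℂ) (huv : u ≠ v) (huv' : u ≠ -v)
    (hu2 : u ≠ -(1 / 2)) (hv2 : v ≠ -(1 / 2)) :
    (1 + (u + 1 / 2)⁻¹ • emb1 M (2 * n) F) * (1 + (v + 1 / 2)⁻¹ • emb2 M (2 * n) F)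
        - (1 + (v + 1 / 2)⁻¹ • emb2 M (2 * n) F) * (1 + (u + 1 / 2)⁻¹ • emb1 M (2 * n) F)
      = (u - v)⁻¹ • (PmatA M (2 * n) A * (1 + (u + 1 / 2)⁻¹ • emb1 M (2 * n) F)
              * (1 + (v + 1 / 2)⁻¹ • emb2 M (2 * n) F)
            - (1 + (v + 1 / 2)⁻¹ • emb2 M (2 * n) F)
              * (1 + (u + 1 / 2)⁻¹ • emb1 M (2 * n) F) * PmatA M (2 * n) A)
        - (u + v)⁻¹ • ((1 + (u + 1 / 2)⁻¹ • emb1 M (2 * n) F) * QmatA M (2 * n) A θ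
              * (1 + (v + 1 / 2)⁻¹ • emb2 M (2 * n) F)
            - (1 + (v + 1 / 2)⁻¹ • emb2 M (2 * n) F) * QmatA M (2 * n) A θ
              * (1 + (u + 1 / 2)⁻¹ • emb1 M (2 * n) F))
        + (u ^ 2 - v ^ 2)⁻¹ • (PmatA M (2 * n) A * (1 + (u + 1 / 2)⁻¹ • emb1 M (2 * n) F)
              * QmatA M (2 * n) A θ * (1 + (v + 1 / 2)⁻¹ • emb2 M (2 * n) F)
            - (1 + (v + 1 / 2)⁻¹ • emb2 M (2 * n) F) * QmatA M (2 * n) A θ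
              * (1 + (u + 1 / 2)⁻¹ • emb1 M (2 * n) F) * PmatA M (2 * n) A) := by
  have hu : u + 1 / 2 ≠ 0 := fun h => hu2 (eq_neg_of_add_eq_zero_left h)
  have hv : v + 1 / 2 ≠ 0 := fun h => hv2 (eq_neg_of_add_eq_zero_left h)
  have hdiff : u - v ≠ 0 := sub_ne_zero.mpr huv
  have hsum : u + v ≠ 0 := fun h => huv' (eq_neg_of_add_eq_zero_left h)
  have hsq : u ^ 2 - v ^ 2 ≠ 0 := by rw [sq_sub_sq]; exact mul_ne_zero hsum hdiff
  refine one_add_smul_reflection hP2 hPQ hQP hint1 hint2 hint3 hosp ?_ ?_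
  · rw [inv_sub_inv hv hu]
    field_simp
    ring
  · rw [inv_sub_inv hu hv, inv_add_inv hu hv]
    field_simp
    ring

/-- let `F` satisfy `F^t = −F` and the `osp(M|2n)` relation, with
`P² = I`, `PQ = QP = θ₀Q` (θ₀ = +1 here), `Q² = (M−2n)Q`, and the intertwining
relations `P₁₂F₂ = F₁P₁₂`, `Q₁₂F₂ = −Q₁₂F₁`, `F₁Q₁₂ = −F₂Q₁₂`. Then
`𝔽(u) = I + (u+1/2)⁻¹F` satisfies the reflection-type relation. -/
theorem osp_evaluation_reflection (M n : ℕ) (A : Type*) [Ring A] [Algebra ℂ A]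
    (θ : Fin (M + 2 * n) → ℂ)
    (hθ : ∀ a, θ a = 1 ∨ θ a = -1)
    (hθ₀ : ∀ a, (-1 : ℂ) ^ (gr M (2 * n) a) * θ a * θ (bar M (2 * n) a) = 1)
    (F : Matrix (Fin (M + 2 * n)) (Fin (M + 2 * n)) A)
    (hFeven : ∀ a b, (gr M (2 * n) a + gr M (2 * n) b) % 2 = 1 → F a b = 0)
    (hFt : stranspA M (2 * n) θ F = -F)
    (hP2 : PmatA M (2 * n) A * PmatA M (2 * n) A = 1)
    (hPQ : PmatA M (2 * n) A * QmatA M (2 * n) A θ = QmatA M (2 * n) A θ)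
    (hQP : QmatA M (2 * n) A θ * PmatA M (2 * n) A = QmatA M (2 * n) A θ)
    (hQ2 : QmatA M (2 * n) A θ * QmatA M (2 * n) A θ
      = (((M : ℂ) - 2 * (n : ℂ))) • QmatA M (2 * n) A θ)
    (hint1 : PmatA M (2 * n) A * emb2 M (2 * n) F = emb1 M (2 * n) F * PmatA M (2 * n) A)
    (hint2 : QmatA M (2 * n) A θ * emb2 M (2 * n) F = -(QmatA M (2 * n) A θ * emb1 M (2 * n) F))
    (hint3 : emb1 M (2 * n) F * QmatA M (2 * n) A θ = -(emb2 M (2 * n) F * QmatA M (2 * n) A θ))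
    (hosp : emb1 M (2 * n) F * emb2 M (2 * n) F - emb2 M (2 * n) F * emb1 M (2 * n) F
      = PmatA M (2 * n) A * emb2 M (2 * n) F - emb2 M (2 * n) F * PmatA M (2 * n) A
        + emb2 M (2 * n) F * QmatA M (2 * n) A θ - QmatA M (2 * n) A θ * emb2 M (2 * n) F)
    (u v : ℂ) (huv : u ≠ v) (huv' : u ≠ -v)
    (hu1 : u ≠ 1 / 2) (hu2 : u ≠ -(1 / 2)) (hv1 : v ≠ 1 / 2) (hv2 : v ≠ -(1 / 2)) :
    (1 + (u + 1 / 2)⁻¹ • emb1 M (2 * n) F) * (1 + (v + 1 / 2)⁻¹ • emb2 M (2 * n) F)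
        - (1 + (v + 1 / 2)⁻¹ • emb2 M (2 * n) F) * (1 + (u + 1 / 2)⁻¹ • emb1 M (2 * n) F)
      = (u - v)⁻¹ • (PmatA M (2 * n) A * (1 + (u + 1 / 2)⁻¹ • emb1 M (2 * n) F)
              * (1 + (v + 1 / 2)⁻¹ • emb2 M (2 * n) F)
            - (1 + (v + 1 / 2)⁻¹ • emb2 M (2 * n) F)
              * (1 + (u + 1 / 2)⁻¹ • emb1 M (2 * n) F) * PmatA M (2 * n) A)
        - (u + v)⁻¹ • ((1 + (u + 1 / 2)⁻¹ • emb1 M (2 * n) F) * QmatA M (2 * n) A θ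
              * (1 + (v + 1 / 2)⁻¹ • emb2 M (2 * n) F)
            - (1 + (v + 1 / 2)⁻¹ • emb2 M (2 * n) F) * QmatA M (2 * n) A θ
              * (1 + (u + 1 / 2)⁻¹ • emb1 M (2 * n) F))
        + (u ^ 2 - v ^ 2)⁻¹ • (PmatA M (2 * n) A * (1 + (u + 1 / 2)⁻¹ • emb1 M (2 * n) F)
              * QmatA M (2 * n) A θ * (1 + (v + 1 / 2)⁻¹ • emb2 M (2 * n) F)
            - (1 + (v + 1 / 2)⁻¹ • emb2 M (2 * n) F) * QmatA M (2 * n) A θ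
              * (1 + (u + 1 / 2)⁻¹ • emb1 M (2 * n) F) * PmatA M (2 * n) A) :=
  osp_evaluation_reflection_general M n A θ F hP2 hPQ hQP hint1 hint2 hint3 hosp u v huv huv' hu2
    hv2
end
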